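/- arXiv:1112.1313 — 2 statements merged into one kernel-verified Lean document; each statement's English description precedes it below -/
import Mathlib

section
/- If gcd(m,s) = 1, then min-seed(P(m,s),2) = ⌈(m+1)/2⌉, as a consequence of the fact that P(m,s) is then a cycle permutation graph. -/
/-- Activation closure: `v` eventually becomes active when starting from seed set `S`
in graph `G` with thresholds `θ` (a vertex activates once at least `θ v` of its
neighbors are active). -/
inductive Activated {V : Type*} (G : SimpleGraph V) (θ : V → ℕ) (S : Set V) : V → Prop
  | base {v : V} : v ∈ S → Activated G θ S v
  | step {v : V} (T : Finset V) (hadj : ∀ u ∈ T, G.Adj u v) (hcard : θ v ≤ T.card)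
      (hact : ∀ u ∈ T, Activated G θ S u) : Activated G θ S v

/-- Minimum size of a target set whose activation closure is all of `V`. -/
noncomputable def minSeed {V : Type*} [Fintype V] (G : SimpleGraph V) (θ : V → ℕ) : ℕ :=
  sInf {k | ∃ S : Finset V, S.card = k ∧ ∀ v, Activated G θ (↑S) v}

/-- The generalized Petersen graph `P(m,s)`: outer cycle vertices `v_i = (false, i)`,
inner vertices `u_i = (true, i)`, edges `v_i v_{i+1}`, `u_i v_i`, `u_i u_{i+s}`
(indices mod `m`). -/
def genPetersen (m s : ℕ) [NeZero m] : SimpleGraph (Bool × ZMod m) :=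
  SimpleGraph.fromRel (fun a b =>
    (a.1 = false ∧ b.1 = false ∧ b.2 = a.2 + 1) ∨
    (a.1 = true ∧ b.1 = false ∧ b.2 = a.2) ∨
    (a.1 = true ∧ b.1 = true ∧ b.2 = a.2 + (s : ZMod m)))

/-!
For the lower bound, order the vertices of a cubic graph by activation time, breaking ties
arbitrarily, and count every edge at its later endpoint. Each vertex outside the seed set `S`
accounts for at least two edges and the last vertex for all three of its edges, so
`3n/2 ≥ 2(n - |S|) + 1`, i.e. `4|S| ≥ n + 2`; for `P(m,s)` this is `|S| ≥ ⌈(m+1)/2⌉`.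

For the upper bound, seed `u₀` and the odd outer vertices `v₁, v₃, …`. The outer cycle fills up
first, and then `u_{(k+1)s}` has the active neighbours `u_{ks}` and `v_{(k+1)s}`. As `s` is a
unit mod `m`, the inner cycle `u₀, u_s, u_{2s}, …` passes through every inner vertex.
-/

open Finset Function

namespace Activated

variable {V : Type*} {G : SimpleGraph V} {θ : V → ℕ} {S : Set V}

variable (G θ S) in
def activeAfter : ℕ → Set V
  | 0 => S
  | n + 1 => activeAfter n ∪
      {v | ∃ T : Finset V, (∀ u ∈ T, G.Adj u v) ∧ θ v ≤ #T ∧ ↑T ⊆ activeAfter n}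

theorem monotone_activeAfter : Monotone (activeAfter G θ S) :=
  monotone_nat_of_le_succ fun _ => Set.subset_union_left

theorem exists_mem_activeAfter {v : V} (h : Activated G θ S v) :
    ∃ n, v ∈ activeAfter G θ S n := by
  induction h with
  | base hv => exact ⟨0, hv⟩
  | @step v T hadj hcard _ ih =>
    choose! n hn using ih
    refine ⟨T.sup n + 1, Or.inr ⟨T, hadj, hcard, fun u hu => ?_⟩⟩
    exact monotone_activeAfter (le_sup hu) (hn u hu)

theorem exists_activation_time (h : ∀ v, Activated G θ S v) :
    ∃ time : V → ℕ, ∀ v ∉ S,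
      ∃ T : Finset V, θ v ≤ #T ∧ ∀ u ∈ T, G.Adj u v ∧ time u < time v := by
  classical
  have hex v : ∃ n, v ∈ activeAfter G θ S n := (h v).exists_mem_activeAfter
  refine ⟨fun v => Nat.find (hex v), fun v hv => ?_⟩
  obtain ⟨k, hk⟩ : ∃ k, Nat.find (hex v) = k + 1 :=
    Nat.exists_eq_succ_of_ne_zero fun h0 => hv ((Nat.find_eq_zero (hex v)).1 h0)
  have hvk : v ∉ activeAfter G θ S k := Nat.find_min (hex v) (by omega)
  obtain hv' | ⟨T, hadj, hcard, hT⟩ := hk ▸ Nat.find_spec (hex v)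
  · exact absurd hv' hvk
  · refine ⟨T, hcard, fun u hu => ⟨hadj u hu, ?_⟩⟩
    show Nat.find (hex u) < Nat.find (hex v)
    exact hk ▸ Nat.lt_succ_of_le (Nat.find_le (hT hu))

theorem of_adj_of_adj {u w v : V} (hθ : θ v ≤ 2) (huw : u ≠ w)
    (hu : G.Adj u v) (hw : G.Adj w v) (hu' : Activated G θ S u) (hw' : Activated G θ S w) :
    Activated G θ S v := by
  classical
  exact .step {u, w} (by simp [hu, hw]) (by rwa [card_pair huw]) (by simp [hu', hw'])

end Activated

namespace SimpleGraph

variable {V : Type*} (G : SimpleGraph V) [Fintype V] [DecidableRel G.Adj]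
  {α : Type*} [LinearOrder α]

def earlierNeighborFinset (key : V → α) (v : V) : Finset V :=
  {u | G.Adj u v ∧ key u < key v}

theorem card_earlierNeighborFinset_add_card {key : V → α} (hkey : Injective key) (v : V) :
    #(G.earlierNeighborFinset key v) + #{u | G.Adj u v ∧ key v < key u} = G.degree v := by
  rw [← card_neighborFinset_eq_degree, neighborFinset_eq_filter,
    ← card_filter_add_card_filter_not (s := {w | G.Adj v w}) (fun u => key u < key v),
    filter_filter, filter_filter, earlierNeighborFinset]
  congr 2
  · simp only [adj_comm]
  · ext u
    simp only [mem_filter, mem_univ, true_and, adj_comm]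
    exact and_congr_right fun h => by
      rw [not_lt, (hkey.ne h.ne).le_iff_lt]

theorem sum_card_earlierNeighborFinset {key : V → α} (hkey : Injective key) :
    ∑ v, #(G.earlierNeighborFinset key v) = #G.edgeFinset := by
  have hlater :
      ∑ v, #{u | G.Adj u v ∧ key v < key u} = ∑ v, #(G.earlierNeighborFinset key v) := by
    simp only [earlierNeighborFinset, card_filter]
    rw [sum_comm]
    simp only [adj_comm]
  have := G.sum_degrees_eq_twice_card_edges
  simp only [← G.card_earlierNeighborFinset_add_card hkey, sum_add_distrib, hlater] at this
  omega

variable {G}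

theorem exists_activation_order {θ : V → ℕ} {S : Set V} (h : ∀ v, Activated G θ S v) :
    ∃ key : V → ℕ ×ₗ ℕ, Injective key ∧
      ∀ v ∉ S, θ v ≤ #(G.earlierNeighborFinset key v) := by
  obtain ⟨time, htime⟩ := Activated.exists_activation_time h
  let e := Fintype.equivFin V
  refine ⟨fun v => toLex (time v, (e v : ℕ)), fun u v huv => ?_, fun v hv => ?_⟩
  · exact e.injective (Fin.ext (congrArg Prod.snd (toLex.injective huv)))
  · obtain ⟨T, hcard, hT⟩ := htime v hv
    refine hcard.trans (card_le_card fun u hu => ?_)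
    simp only [earlierNeighborFinset, mem_filter, mem_univ, true_and, Prod.Lex.toLex_lt_toLex]
    exact ⟨(hT u hu).1, Or.inl (hT u hu).2⟩

theorem IsRegularOfDegree.card_add_two_le_four_mul_card [Nonempty V]
    (hG : G.IsRegularOfDegree 3) {S : Finset V} (hS : ∀ v, Activated G (fun _ => 2) ↑S v) :
    Fintype.card V + 2 ≤ 4 * #S := by
  classical
  obtain ⟨key, hinj, hkey⟩ := exists_activation_order hS
  obtain ⟨w, -, hw⟩ := exists_max_image univ key univ_nonempty
  have hw3 : #(G.earlierNeighborFinset key w) = 3 := by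
    rw [← hG.degree_eq w, ← card_neighborFinset_eq_degree, neighborFinset_eq_filter]
    congr 1
    ext u
    simp only [earlierNeighborFinset, mem_filter, mem_univ, true_and, adj_comm,
      and_iff_left_iff_imp]
    exact fun h => (hw u (mem_univ u)).lt_of_ne (hinj.ne h.ne')
  have hedges : 2 * #G.edgeFinset = 3 * Fintype.card V := by
    rw [← sum_degrees_eq_twice_card_edges, sum_congr rfl fun v _ => hG.degree_eq v, sum_const,
      card_univ, smul_eq_mul, mul_comm]
  have hsum : 2 * (Fintype.card V - #S - 1) + 3 ≤ #G.edgeFinset := by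
    rw [← G.sum_card_earlierNeighborFinset hinj, ← add_sum_erase _ _ (mem_univ w), hw3]
    calc 2 * (Fintype.card V - #S - 1) + 3
        ≤ #(Sᶜ.erase w) • 2 + 3 := by
          rw [smul_eq_mul, ← card_compl]
          have := pred_card_le_card_erase (s := Sᶜ) (a := w)
          omega
      _ ≤ ∑ v ∈ Sᶜ.erase w, #(G.earlierNeighborFinset key v) + 3 := by
          gcongr
          exact card_nsmul_le_sum _ _ _ fun v hv => hkey v (by simpa using (mem_erase.1 hv).2)
      _ ≤ 3 + ∑ v ∈ univ.erase w, #(G.earlierNeighborFinset key v) := by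
          rw [add_comm]
          gcongr
          exact subset_univ _
  omega

end SimpleGraph

section GenPetersen

variable {m s : ℕ} [NeZero m]

theorem genPetersen_adj_outer (h1 : (1 : ZMod m) ≠ 0) (i : ZMod m) :
    (genPetersen m s).Adj (false, i) (false, i + 1) := by
  simp [genPetersen, h1]

theorem genPetersen_adj_spoke (i : ZMod m) : (genPetersen m s).Adj (true, i) (false, i) := by
  simp [genPetersen]

theorem genPetersen_adj_inner (hs : (s : ZMod m) ≠ 0) (i : ZMod m) :
    (genPetersen m s).Adj (true, i) (true, i + s) := by
  simp [genPetersen, hs]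

variable [DecidableRel (genPetersen m s).Adj]

theorem genPetersen_neighborFinset_outer (h1 : (1 : ZMod m) ≠ 0) (i : ZMod m) :
    (genPetersen m s).neighborFinset (false, i) = {(false, i + 1), (false, i - 1), (true, i)} := by
  ext ⟨b, j⟩
  rw [SimpleGraph.mem_neighborFinset]
  cases b <;> simp [genPetersen] <;> grind

theorem genPetersen_neighborFinset_inner (hs : (s : ZMod m) ≠ 0) (i : ZMod m) :
    (genPetersen m s).neighborFinset (true, i) = {(false, i), (true, i + s), (true, i - s)} := by
  ext ⟨b, j⟩
  rw [SimpleGraph.mem_neighborFinset]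
  cases b
  · simp [genPetersen]
  · simp [genPetersen]
    grind

theorem genPetersen_isRegularOfDegree_three (h2 : (2 : ZMod m) ≠ 0)
    (h2s : 2 * (s : ZMod m) ≠ 0) : (genPetersen m s).IsRegularOfDegree 3 := by
  have h1 : (1 : ZMod m) ≠ 0 := fun h => h2 (by rw [← one_add_one_eq_two, h, add_zero])
  have hs : (s : ZMod m) ≠ 0 := fun h => h2s (by rw [h, mul_zero])
  rintro ⟨_ | _, i⟩
  · rw [← SimpleGraph.card_neighborFinset_eq_degree, genPetersen_neighborFinset_outer h1]
    have : i + 1 ≠ i - 1 := fun h => h2 (by linear_combination h)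
    simp [this]
  · rw [← SimpleGraph.card_neighborFinset_eq_degree, genPetersen_neighborFinset_inner hs]
    have : i + s ≠ i - s := fun h => h2s (by linear_combination h)
    simp [this]

end GenPetersen

theorem ZMod.two_ne_zero_of_three_le {m : ℕ} (hm : 3 ≤ m) : (2 : ZMod m) ≠ 0 := by
  simpa using (ZMod.natCast_eq_zero_iff 2 m).not.2 (Nat.not_dvd_of_pos_of_lt two_pos hm)

section GenPetersenSeed

variable {m s : ℕ}

variable (m) in
def genPetersenSeed : Finset (Bool × ZMod m) :=
  insert (true, 0) ((range (m / 2)).image fun k => (false, ((2 * k + 1 : ℕ) : ZMod m)))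

theorem card_genPetersenSeed : #(genPetersenSeed m) = (m + 2) / 2 := by
  rw [genPetersenSeed, card_insert_of_notMem (by simp), card_image_of_injOn, card_range]
  · omega
  · intro a ha b hb hab
    simp only [coe_range, Set.mem_Iio] at ha hb
    have := (ZMod.natCast_eq_natCast_iff' _ _ m).1 (congrArg Prod.snd hab)
    rw [Nat.mod_eq_of_lt (by omega), Nat.mod_eq_of_lt (by omega)] at this
    omega

variable [NeZero m]

theorem activated_genPetersenSeed_outer (hm : 3 ≤ m) (c : ZMod m) :
    Activated (genPetersen m s) (fun _ => 2) ↑(genPetersenSeed m) (false, c) := by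
  set A := Activated (genPetersen m s) (fun _ => 2) ↑(genPetersenSeed m)
  have h2 := ZMod.two_ne_zero_of_three_le hm
  have : Nontrivial (ZMod m) := nontrivial_of_ne _ _ h2
  have hodd (k : ℕ) (hk : 2 * k + 1 < m) : A (false, ((2 * k + 1 : ℕ) : ZMod m)) :=
    .base (mem_insert_of_mem (mem_image.2 ⟨k, mem_range.2 (by omega), rfl⟩))
  have hv0 : A (false, 0) := by
    refine .of_adj_of_adj (u := (false, (1 : ZMod m))) le_rfl (by simp) ?_
      (genPetersen_adj_spoke (0 : ZMod m)) ?_ (.base (mem_insert_self _ _))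
    · simpa using (genPetersen_adj_outer (s := s) one_ne_zero (0 : ZMod m)).symm
    · simpa using hodd 0 (by omega)
  have hc := ZMod.val_lt c
  rw [← ZMod.natCast_zmod_val c]
  obtain ⟨k, hk | hk⟩ := Nat.even_or_odd' c.val
  · rw [hk]
    cases k with
    | zero => simpa using hv0
    | succ k =>
      set x : ZMod m := ((2 * k + 1 : ℕ) : ZMod m)
      have hnext : A (false, x + 1 + 1) := by
        have hx : x + 1 + 1 = ((2 * k + 3 : ℕ) : ZMod m) := by push_cast [x]; ring
        rcases (show 2 * k + 3 ≤ m by omega).lt_or_eq with h | h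
        · simpa [hx, mul_add, add_assoc] using hodd (k + 1) (by omega)
        · rwa [hx, h, ZMod.natCast_self]
      have hcast : ((2 * (k + 1) : ℕ) : ZMod m) = x + 1 := by push_cast [x]; ring
      rw [hcast]
      refine .of_adj_of_adj le_rfl ?_ (genPetersen_adj_outer one_ne_zero x)
        (genPetersen_adj_outer one_ne_zero (x + 1)).symm (hodd k (by omega)) hnext
      simp only [ne_eq, Prod.mk.injEq, true_and]
      exact fun h => h2 (by linear_combination -h)
  · exact hk ▸ hodd k (hk ▸ hc)

theorem activated_genPetersenSeed (hm : 3 ≤ m) (hs : IsUnit (s : ZMod m))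
    (v : Bool × ZMod m) : Activated (genPetersen m s) (fun _ => 2) ↑(genPetersenSeed m) v := by
  have : Nontrivial (ZMod m) := nontrivial_of_ne _ _ (ZMod.two_ne_zero_of_three_le hm)
  have hinner (k : ℕ) :
      Activated (genPetersen m s) (fun _ => 2) ↑(genPetersenSeed m) (true, k * s) := by
    induction k with
    | zero => simpa using (Activated.base (mem_insert_self _ _) :
        Activated (genPetersen m s) (fun _ => 2) ↑(genPetersenSeed m) (true, 0))
    | succ k ih =>
      rw [Nat.cast_succ, add_one_mul]
      exact .of_adj_of_adj le_rfl (by simp) (genPetersen_adj_inner hs.ne_zero _)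
        (genPetersen_adj_spoke _).symm ih (activated_genPetersenSeed_outer hm _)
  obtain ⟨b, c⟩ := v
  cases b
  · exact activated_genPetersenSeed_outer hm c
  · obtain ⟨u, hu⟩ := hs
    have := hinner (c * ↑u⁻¹ : ZMod m).val
    rwa [ZMod.natCast_zmod_val, ← hu, mul_assoc, Units.inv_mul, mul_one] at this

end GenPetersenSeed

theorem minSeed_eq {V : Type*} [Fintype V] {G : SimpleGraph V} {θ : V → ℕ} {S : Finset V}
    (hS : ∀ v, Activated G θ ↑S v)
    (hmin : ∀ T : Finset V, (∀ v, Activated G θ ↑T v) → #S ≤ #T) :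
    minSeed G θ = #S :=
  le_antisymm (Nat.sInf_le ⟨S, rfl, hS⟩)
    (le_csInf ⟨_, S, rfl, hS⟩ fun _ ⟨T, hT, hTa⟩ => hT ▸ hmin T hTa)

theorem minSeed_genPetersen_coprime_general (m s : ℕ) [NeZero m] (hm : 3 ≤ m)
    (hgcd : Nat.gcd m s = 1) :
    minSeed (genPetersen m s) (fun _ => 2) = (m + 2) / 2 := by
  classical
  have h2 : (2 : ZMod m) ≠ 0 := ZMod.two_ne_zero_of_three_le hm
  have hs : IsUnit (s : ZMod m) := (ZMod.isUnit_iff_coprime s m).2 (Nat.coprime_comm.1 hgcd)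
  have hreg : (genPetersen m s).IsRegularOfDegree 3 :=
    genPetersen_isRegularOfDegree_three h2 fun h => h2 (hs.mul_left_eq_zero.1 h)
  rw [← card_genPetersenSeed]
  refine minSeed_eq (activated_genPetersenSeed hm hs) fun S hS => ?_
  have := hreg.card_add_two_le_four_mul_card hS
  rw [card_genPetersenSeed, Fintype.card_prod, Fintype.card_bool, ZMod.card] at *
  omega

/-- If `gcd(m,s) = 1` then `min-seed(P(m,s), 2) = ⌈(m+1)/2⌉`. -/
theorem minSeed_genPetersen_coprime (m s : ℕ) [NeZero m] (hm : 3 ≤ m)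
    (hs1 : 1 ≤ s) (hs2 : s ≤ (m - 1) / 2) (hgcd : Nat.gcd m s = 1) :
    minSeed (genPetersen m s) (fun _ => 2) = (m + 2) / 2 :=
  minSeed_genPetersen_coprime_general m s hm hgcd
end

section
/- For every m ≥ 3, the minimum size of a target set activating all vertices of the torus cordalis C_m ⊘ C_3 under constant threshold 3 equals m + 1. -/
/-- The torus cordalis `C_m ⊘ C_n` on vertices `(i,j)`, `i : ZMod m`, `j : Fin n`
(`j` playing the role of `1,…,n`): edges `(i,j)(i±1,j)`, `(i,j)(i,j+1)` for `j < n`,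
and the shifted wrap-around edge `(i,n)(i+1,1)`. -/
def torusCordalis (m n : ℕ) [NeZero m] : SimpleGraph (ZMod m × Fin n) :=
  SimpleGraph.fromRel (fun a b =>
    (b.1 = a.1 + 1 ∧ b.2 = a.2) ∨
    (a.1 = b.1 ∧ (b.2 : ℕ) = (a.2 : ℕ) + 1) ∨
    ((a.2 : ℕ) = n - 1 ∧ (b.2 : ℕ) = 0 ∧ b.1 = a.1 + 1))

namespace Activated

variable {V W : Type*} {G : SimpleGraph V} {G' : SimpleGraph W} {θ : V → ℕ} {S : Set V}

theorem map (f : G ↪g G') {θ' : W → ℕ} (hθ : ∀ v, θ' (f v) ≤ θ v) {v : V}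
    (h : Activated G θ S v) : Activated G' θ' (f '' S) (f v) := by
  induction h with
  | base hv => exact base (Set.mem_image_of_mem f hv)
  | step T hadj hcard _ ih =>
    refine step (T.map f.toEmbedding) ?_ ?_ ?_
    · simpa using fun u hu => f.map_adj_iff.2 (hadj u hu)
    · simpa using (hθ _).trans hcard
    · simpa using ih

theorem of_forall_adj_ne {v : V} [Fintype (G.neighborSet v)] (u : V)
    (hdeg : θ v + 1 ≤ G.degree v) (h : ∀ w, G.Adj w v → w ≠ u → Activated G θ S w) :
    Activated G θ S v := by
  classical
  refine step ((G.neighborFinset v).erase u) (fun w hw => ?_) ?_ fun w hw => ?_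
  · exact G.adj_symm ((G.mem_neighborFinset v w).1 (Finset.mem_of_mem_erase hw))
  · have := Finset.pred_card_le_card_erase (s := G.neighborFinset v) (a := u)
    rw [G.card_neighborFinset_eq_degree] at this
    omega
  · obtain ⟨hwu, hw⟩ := Finset.mem_erase.1 hw
    exact h w (G.adj_symm ((G.mem_neighborFinset v w).1 hw)) hwu

def activeWithin (G : SimpleGraph V) (θ : V → ℕ) (S : Set V) : ℕ → Set V
  | 0 => S
  | n + 1 => activeWithin G θ S n ∪ {v | ∃ T : Finset V,
      (∀ u ∈ T, G.Adj u v ∧ u ∈ activeWithin G θ S n) ∧ θ v ≤ T.card}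

theorem monotone_activeWithin : Monotone (activeWithin G θ S) :=
  monotone_nat_of_le_succ fun _ => Set.subset_union_left

theorem exists_mem_activeWithin {v : V} (h : Activated G θ S v) :
    ∃ n, v ∈ activeWithin G θ S n := by
  induction h with
  | base hv => exact ⟨0, hv⟩
  | step T hadj hcard _ ih =>
    choose! n hn using ih
    refine ⟨T.sup n + 1, Or.inr ⟨T, fun u hu => ⟨hadj u hu, ?_⟩, hcard⟩⟩
    exact monotone_activeWithin (Finset.le_sup hu) (hn u hu)

theorem exists_rank (h : ∀ v, Activated G θ S v) :
    ∃ r : V → ℕ, ∀ v ∉ S,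
      ∃ T : Finset V, (∀ u ∈ T, G.Adj u v ∧ r u < r v) ∧ θ v ≤ T.card := by
  classical
  have hex v := exists_mem_activeWithin (h v)
  refine ⟨fun v => Nat.find (hex v), fun v hv => ?_⟩
  obtain ⟨k, hk⟩ : ∃ k, Nat.find (hex v) = k + 1 := Nat.exists_eq_succ_of_ne_zero fun h0 =>
    hv (by simpa [h0, activeWithin] using Nat.find_spec (hex v))
  have hmem := Nat.find_spec (hex v)
  rw [hk] at hmem
  rcases hmem with hmem | ⟨T, hT, hcard⟩
  · exact absurd hmem (Nat.find_min (hex v) (by omega))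
  · refine ⟨T, fun u hu => ⟨(hT u hu).1, ?_⟩, hcard⟩
    show Nat.find (hex u) < Nat.find (hex v)
    have := Nat.find_min' (hex u) (hT u hu).2
    omega

end Activated

section Counting

open Finset

variable {V : Type*} [Fintype V] [DecidableEq V] {G : SimpleGraph V} [DecidableRel G.Adj]

theorem card_adj_lt_add_card_adj_gt_le_degree (r : V → ℕ) (u : V) :
    #{v | G.Adj u v ∧ r u < r v} + #{v | G.Adj v u ∧ r v < r u} ≤ G.degree u := by
  rw [← card_union_of_disjoint (disjoint_filter.2 fun _ _ h h' => by omega),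
    ← G.card_neighborFinset_eq_degree]
  refine card_le_card fun v hv => ?_
  simp only [mem_union, mem_filter, mem_univ, true_and] at hv
  rw [G.mem_neighborFinset]
  exact hv.elim (·.1) (·.1.symm)

theorem threshold_mul_card_compl_le_of_rank {d t : ℕ} (hdeg : ∀ v, G.degree v ≤ d)
    {S : Finset V} (r : V → ℕ) (hr : ∀ v ∉ S, t ≤ #{u | G.Adj u v ∧ r u < r v}) :
    t * #Sᶜ ≤ (d - t) * (#Sᶜ - 1) + d * #S := by
  set R : V → V → Prop := fun u v => G.Adj u v ∧ r u < r v
  rcases Sᶜ.eq_empty_or_nonempty with hC | hC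
  · simp [hC]
  obtain ⟨w, hwC, hwmax⟩ := Sᶜ.exists_max_image r hC
  have hlater_le (u : V) (X : Finset V) : #{v ∈ X | R u v} + #{v | R v u} ≤ d := by
    have : #{v ∈ X | R u v} ≤ #{v | R u v} :=
      card_le_card (filter_subset_filter _ (subset_univ X))
    exact (Nat.add_le_add_right this _).trans
      ((card_adj_lt_add_card_adj_gt_le_degree r u).trans (hdeg u))
  have hlater (u : V) (hu : u ∈ Sᶜ) : #{v ∈ Sᶜ | R u v} ≤ d - t := by
    have : t ≤ #{v | R v u} := hr u (mem_compl.1 hu)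
    have := hlater_le u Sᶜ
    omega
  have hlast : #{v ∈ Sᶜ | R w v} = 0 :=
    card_eq_zero.2 (filter_eq_empty_iff.2 fun v hv hR => absurd (hwmax v hv) (not_le.2 hR.2))
  have hsplit (v : V) (hv : v ∈ Sᶜ) : t ≤ #{u ∈ Sᶜ | R u v} + #{u ∈ S | R u v} := by
    refine (hr v (mem_compl.1 hv)).trans ((card_le_card fun u hu => ?_).trans (card_union_le _ _))
    by_cases huS : u ∈ S <;> simp_all [R]
  calc t * #Sᶜ = ∑ v ∈ Sᶜ, t := by rw [sum_const, smul_eq_mul, mul_comm]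
    _ ≤ ∑ v ∈ Sᶜ, (#{u ∈ Sᶜ | R u v} + #{u ∈ S | R u v}) := sum_le_sum hsplit
    _ = ∑ u ∈ Sᶜ, #{v ∈ Sᶜ | R u v} + ∑ u ∈ S, #{v ∈ Sᶜ | R u v} := by
      rw [sum_add_distrib]
      exact congrArg₂ (· + ·)
        (sum_card_bipartiteAbove_eq_sum_card_bipartiteBelow R (s := Sᶜ) (t := Sᶜ)).symm
        (sum_card_bipartiteAbove_eq_sum_card_bipartiteBelow R (s := S) (t := Sᶜ)).symm
    _ ≤ (d - t) * (#Sᶜ - 1) + d * #S := by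
      gcongr
      · rw [← sum_erase (f := fun u => #{v ∈ Sᶜ | R u v}) _ hlast, ← card_erase_of_mem hwC,
          mul_comm]
        exact sum_le_card_nsmul _ _ _ fun u hu => hlater u (mem_of_mem_erase hu)
      · rw [mul_comm]
        exact sum_le_card_nsmul _ _ _ fun u _ => (Nat.le_add_right _ _).trans (hlater_le u Sᶜ)

theorem Activated.threshold_mul_card_compl_le {d t : ℕ} (hdeg : ∀ v, G.degree v ≤ d)
    {S : Finset V} (h : ∀ v, Activated G (fun _ => t) S v) :
    t * #Sᶜ ≤ (d - t) * (#Sᶜ - 1) + d * #S := by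
  obtain ⟨r, hr⟩ := Activated.exists_rank h
  refine threshold_mul_card_compl_le_of_rank hdeg r fun v hv => ?_
  obtain ⟨T, hT, hcard⟩ := hr v hv
  exact hcard.trans (card_le_card fun u hu => by simpa using hT u hu)

end Counting

theorem minSeed_eq_card_of_forall_le {V : Type*} [Fintype V] {G : SimpleGraph V} {θ : V → ℕ}
    (S₀ : Finset V) (hS₀ : ∀ v, Activated G θ S₀ v)
    (hmin : ∀ S : Finset V, (∀ v, Activated G θ S v) → S₀.card ≤ S.card) :
    minSeed G θ = S₀.card :=
  le_antisymm (Nat.sInf_le ⟨S₀, rfl, hS₀⟩)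
    (le_csInf ⟨_, S₀, rfl, hS₀⟩ fun _ ⟨S, hS, h⟩ => hS ▸ hmin S h)

theorem exists_seed_of_iso {V W : Type*} {G : SimpleGraph V} {G' : SimpleGraph W} (e : G ≃g G')
    {t k : ℕ} (h : ∃ S : Finset V, S.card = k ∧ ∀ v, Activated G (fun _ => t) S v) :
    ∃ S : Finset W, S.card = k ∧ ∀ w, Activated G' (fun _ => t) S w := by
  obtain ⟨S, rfl, hS⟩ := h
  refine ⟨S.map e.toEquiv.toEmbedding, S.card_map _, fun w => ?_⟩
  simpa using (hS (e.symm w)).map e.toEmbedding (θ' := fun _ => t) fun _ => le_rfl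

theorem minSeed_congr {V W : Type*} [Fintype V] [Fintype W] {G : SimpleGraph V}
    {G' : SimpleGraph W} (e : G ≃g G') (t : ℕ) :
    minSeed G (fun _ => t) = minSeed G' (fun _ => t) :=
  congrArg sInf (Set.ext fun _ => ⟨exists_seed_of_iso e, exists_seed_of_iso e.symm⟩)

section TorusCordalis

theorem natCast_mul_val_natCast (m n x : ℕ) :
    ((n * (x : ZMod m).val : ℕ) : ZMod (n * m)) = ((n * x : ℕ) : ZMod (n * m)) := by
  rw [ZMod.val_natCast, ← Nat.mul_mod_mul_left, ZMod.natCast_mod]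

variable {m n : ℕ} [NeZero m]

def torusCordalisIndex (m n : ℕ) [NeZero m] (a : ZMod m × Fin n) : ZMod (n * m) :=
  ((n * a.1.val + a.2.val : ℕ) : ZMod (n * m))

theorem val_torusCordalisIndex [NeZero n] (a : ZMod m × Fin n) :
    (torusCordalisIndex m n a).val = n * a.1.val + a.2.val := by
  refine ZMod.val_natCast_of_lt ?_
  calc n * a.1.val + a.2.val < n * (a.1.val + 1) := by
        rw [mul_add_one]; exact Nat.add_lt_add_left a.2.2 _
    _ ≤ n * m := Nat.mul_le_mul_left n (ZMod.val_lt a.1)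

theorem torusCordalisIndex_injective [NeZero n] : Function.Injective (torusCordalisIndex m n) := by
  intro a b hab
  have hval := congrArg ZMod.val hab
  rw [val_torusCordalisIndex, val_torusCordalisIndex] at hval
  have hdivmod (c : ZMod m × Fin n) := (Nat.div_mod_unique (a := n * c.1.val + c.2.val)
    (Nat.pos_of_neZero n)).2 ⟨add_comm _ _, c.2.2⟩
  obtain ⟨ha1, ha2⟩ := hdivmod a
  obtain ⟨hb1, hb2⟩ := hdivmod b
  rw [hval] at ha1 ha2
  exact Prod.ext (ZMod.val_injective _ (ha1.symm.trans hb1)) (Fin.ext (ha2.symm.trans hb2))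

theorem torusCordalisIndex_fst_add_one (a : ZMod m × Fin n) :
    torusCordalisIndex m n (a.1 + 1, a.2) = torusCordalisIndex m n a + n := by
  have h : a.1 + 1 = ((a.1.val + 1 : ℕ) : ZMod m) := by push_cast [ZMod.natCast_zmod_val]; rfl
  rw [torusCordalisIndex, torusCordalisIndex, h, Nat.cast_add, natCast_mul_val_natCast]
  push_cast
  ring

theorem torusCordalisIndex_snd_succ {a b : ZMod m × Fin n} (h1 : a.1 = b.1)
    (h2 : (b.2 : ℕ) = a.2 + 1) : torusCordalisIndex m n b = torusCordalisIndex m n a + 1 := by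
  simp only [torusCordalisIndex, h1, h2]
  push_cast
  ring

theorem torusCordalisIndex_wrap {a b : ZMod m × Fin n} (h1 : (a.2 : ℕ) = n - 1)
    (h2 : (b.2 : ℕ) = 0) (h3 : b.1 = a.1 + 1) :
    torusCordalisIndex m n b = torusCordalisIndex m n a + 1 := by
  have hshift := torusCordalisIndex_fst_add_one a
  have hn : 1 ≤ n := by have := a.2.2; omega
  simp only [torusCordalisIndex, h1, h2, h3, Nat.cast_add, Nat.cast_sub hn] at hshift ⊢
  linear_combination hshift

theorem torusCordalisIndex_sub_mem_iff [NeZero n] (a b : ZMod m × Fin n) :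
    torusCordalisIndex m n b - torusCordalisIndex m n a ∈ ({1, (n : ZMod (n * m))} : Set _) ↔
      (b.1 = a.1 + 1 ∧ b.2 = a.2) ∨ (a.1 = b.1 ∧ (b.2 : ℕ) = a.2 + 1) ∨
        ((a.2 : ℕ) = n - 1 ∧ (b.2 : ℕ) = 0 ∧ b.1 = a.1 + 1) := by
  have hinj {x y : ZMod m × Fin n} :
      torusCordalisIndex m n x = torusCordalisIndex m n y ↔ x = y :=
    torusCordalisIndex_injective.eq_iff
  simp only [Set.mem_insert_iff, Set.mem_singleton_iff, sub_eq_iff_eq_add']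
  rw [← torusCordalisIndex_fst_add_one, hinj, Prod.ext_iff]
  by_cases h : (a.2 : ℕ) + 1 < n
  · rw [← torusCordalisIndex_snd_succ (a := a) (b := (a.1, ⟨a.2 + 1, h⟩)) rfl rfl, hinj,
      Prod.ext_iff, Fin.ext_iff]
    dsimp only
    grind
  · have h' : (a.2 : ℕ) = n - 1 := by omega
    rw [← torusCordalisIndex_wrap (a := a) (b := (a.1 + 1, ⟨0, by omega⟩)) h' rfl rfl, hinj,
      Prod.ext_iff, Fin.ext_iff]
    dsimp only
    grind

noncomputable def torusCordalisIsoCirculant (m n : ℕ) [NeZero m] [NeZero n] :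
    torusCordalis m n ≃g SimpleGraph.circulantGraph ({1, (n : ZMod (n * m))} : Set _) where
  toEquiv := Equiv.ofBijective _ ((Fintype.bijective_iff_injective_and_card _).2
    ⟨torusCordalisIndex_injective, by simp [mul_comm]⟩)
  map_rel_iff' {a b} := by
    simp only [Equiv.ofBijective_apply, SimpleGraph.circulantGraph_adj, torusCordalis,
      SimpleGraph.fromRel_adj, torusCordalisIndex_injective.ne_iff,
      torusCordalisIndex_sub_mem_iff]
    tauto

end TorusCordalis

section Circulant

open SimpleGraph

variable {N : ℕ}

theorem natCast_ne_zero_of_pos_of_lt {k : ℕ} (h0 : 0 < k) (hk : k < N) : (k : ZMod N) ≠ 0 :=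
  (ZMod.natCast_eq_zero_iff k N).not.2 (Nat.not_dvd_of_pos_of_lt h0 hk)

theorem neighborFinset_circulantGraph_one_three (hN : 4 ≤ N) (x : ZMod N)
    [Fintype ((circulantGraph ({1, 3} : Set (ZMod N))).neighborSet x)] :
    (circulantGraph ({1, 3} : Set (ZMod N))).neighborFinset x = {x + 1, x - 1, x + 3, x - 3} := by
  have h1 := natCast_ne_zero_of_pos_of_lt (N := N) (k := 1) (by norm_num) (by omega)
  have h3 := natCast_ne_zero_of_pos_of_lt (N := N) (k := 3) (by norm_num) (by omega)
  push_cast at h1 h3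
  ext y
  simp only [mem_neighborFinset, circulantGraph_adj, Set.mem_insert_iff, Set.mem_singleton_iff,
    Finset.mem_insert, Finset.mem_singleton]
  grind

theorem degree_circulantGraph_one_three (hN : 7 ≤ N) (x : ZMod N)
    [Fintype ((circulantGraph ({1, 3} : Set (ZMod N))).neighborSet x)] :
    (circulantGraph ({1, 3} : Set (ZMod N))).degree x = 4 := by
  have h2 := natCast_ne_zero_of_pos_of_lt (N := N) (k := 2) (by norm_num) (by omega)
  have h4 := natCast_ne_zero_of_pos_of_lt (N := N) (k := 4) (by norm_num) (by omega)
  have h6 := natCast_ne_zero_of_pos_of_lt (N := N) (k := 6) (by norm_num) (by omega)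
  push_cast at h2 h4 h6
  rw [← card_neighborFinset_eq_degree, neighborFinset_circulantGraph_one_three (by omega),
    Finset.card_insert_of_notMem, Finset.card_insert_of_notMem, Finset.card_pair]
  · exact fun h => h6 (by linear_combination h)
  · simp only [Finset.mem_insert, Finset.mem_singleton, not_or]
    exact ⟨fun h => h4 (by linear_combination -h), fun h => h2 (by linear_combination h)⟩
  · simp only [Finset.mem_insert, Finset.mem_singleton, not_or]
    exact ⟨fun h => h2 (by linear_combination h), fun h => h2 (by linear_combination -h),
      fun h => h4 (by linear_combination h)⟩

theorem activated_circulant_of_forall_offset_ne {S : Set (ZMod N)} (hN : 7 ≤ N)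
    (x u : ℤ)
    (h : ∀ d : ℤ, (d = 1 ∨ d = -1 ∨ d = 3 ∨ d = -3) → d ≠ u →
      Activated (circulantGraph ({1, 3} : Set (ZMod N))) (fun _ => 3) S ((x + d : ℤ) : ZMod N)) :
    Activated (circulantGraph ({1, 3} : Set (ZMod N))) (fun _ => 3) S (x : ZMod N) := by
  have : NeZero N := ⟨by omega⟩
  refine Activated.of_forall_adj_ne ((x + u : ℤ) : ZMod N)
    (by rw [degree_circulantGraph_one_three hN]) fun y hy hne => ?_
  have hy' := (mem_neighborFinset _ _ _).2 hy.symm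
  rw [neighborFinset_circulantGraph_one_three (by omega)] at hy'
  obtain ⟨d, hd, rfl⟩ :
      ∃ d : ℤ, (d = 1 ∨ d = -1 ∨ d = 3 ∨ d = -3) ∧ y = ((x + d : ℤ) : ZMod N) := by
    simp only [Finset.mem_insert, Finset.mem_singleton] at hy'
    rcases hy' with rfl | rfl | rfl | rfl
    exacts [⟨1, by simp⟩, ⟨-1, by simp [sub_eq_add_neg]⟩, ⟨3, by simp⟩,
      ⟨-3, by simp [sub_eq_add_neg]⟩]
  exact h d hd (by rintro rfl; exact hne rfl)

end Circulant

section Percolation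

open SimpleGraph

theorem intCast_injOn_Ico (N : ℕ) : Set.InjOn (Int.cast : ℤ → ZMod N) (Set.Ico 0 N) :=
  fun a ha b hb h => by
    rwa [ZMod.intCast_eq_intCast_iff', Int.emod_eq_of_lt ha.1 ha.2,
      Int.emod_eq_of_lt hb.1 hb.2] at h

/-- `0` and the `x < 3m` with `x ≡ 2, 4 (mod 6)`, listed as `3k + 2 - k % 2` for `k < m`. -/
def circulantSeed (m : ℕ) : Finset (ZMod (3 * m)) :=
  insert 0 ((Finset.range m).image fun k : ℕ => ((3 * k + 2 - k % 2 : ℤ) : ZMod (3 * m)))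

theorem card_circulantSeed (m : ℕ) : (circulantSeed m).card = m + 1 := by
  have hinj := intCast_injOn_Ico (3 * m)
  push_cast at hinj
  rw [circulantSeed, Finset.card_insert_of_notMem, Finset.card_image_of_injOn, Finset.card_range]
  · intro a ha b hb h
    simp only [Finset.coe_range, Set.mem_Iio] at ha hb
    have := hinj (by simp only [Set.mem_Ico]; omega) (by simp only [Set.mem_Ico]; omega) h
    omega
  · simp only [Finset.mem_image, Finset.mem_range, not_exists, not_and]
    intro k hk h
    have := hinj (by simp only [Set.mem_Ico]; omega) (by simp only [Set.mem_Ico]; omega)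
      (h.trans Int.cast_zero.symm)
    omega

namespace circulantSeed

variable {m : ℕ}

local notation "A" x => Activated (circulantGraph ({1, 3} : Set (ZMod (3 * m)))) (fun _ => 3)
  (circulantSeed m : Set (ZMod (3 * m))) ((x : ℤ) : ZMod (3 * m))

theorem activated_of_eq_zero_or_emod_six {x : ℤ} (h0 : 0 ≤ x) (hx : x < 3 * m)
    (h : x = 0 ∨ x % 6 = 2 ∨ x % 6 = 4) : A x := by
  refine Activated.base (Finset.mem_coe.2 ?_)
  rcases h with rfl | h
  · simp [circulantSeed]
  · refine Finset.mem_insert_of_mem (Finset.mem_image.2 ⟨(x / 3).toNat, ?_, by congr 1; omega⟩)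
    rw [Finset.mem_range]
    omega

theorem activated_iff_sub_three_mul (x : ℤ) : (A x) ↔ A (x - 3 * m) := by
  have : ((3 * m : ℤ) : ZMod (3 * m)) = 0 := by exact_mod_cast ZMod.natCast_self (3 * m)
  rw [Int.cast_sub, this, sub_zero]

theorem activated_one (hm : 3 ≤ m) : A 1 := by
  refine activated_circulant_of_forall_offset_ne (by omega) 1 (-3) ?_
  rintro d (rfl | rfl | rfl | rfl) hd
  all_goals first
    | exact absurd rfl hd
    | exact activated_of_eq_zero_or_emod_six (by omega) (by omega) (by omega)

theorem activated_of_emod_six_eq_one_or_five (hm : 3 ≤ m) {x : ℤ} (h0 : 0 < x) (hx : x < 3 * m)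
    (h : x % 6 = 1 ∨ x % 6 = 5) : A x := by
  rcases eq_or_ne x 1 with rfl | hx1
  · exact activated_one hm
  -- Apart from `x - 1` (for `x ≡ 1`) resp. `x + 1` (for `x ≡ 5`), all neighbours are seeds,
  -- except that `x + 3` may wrap around past `3m` to `1` or `2`.
  refine activated_circulant_of_forall_offset_ne (by omega) x
    (if x % 6 = 1 then -1 else 1) ?_
  intro d hd hdu
  replace hdu : (x % 6 = 1 ∧ d ≠ -1) ∨ (x % 6 = 5 ∧ d ≠ 1) := by split_ifs at hdu <;> omega
  rcases lt_or_ge (x + d) (3 * m) with hlt | hge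
  · exact activated_of_eq_zero_or_emod_six (by omega) hlt (by omega)
  rw [activated_iff_sub_three_mul]
  rcases eq_or_ne (x + d - 3 * m) 1 with h1 | h1
  · rw [h1]
    exact activated_one hm
  · exact activated_of_eq_zero_or_emod_six (by omega) (by omega) (by omega)

theorem activated_of_emod_three_ne_zero (hm : 3 ≤ m) {x : ℤ} (h0 : 0 ≤ x) (hx : x < 3 * m)
    (h : x % 3 ≠ 0) : A x := by
  by_cases h6 : x % 6 = 2 ∨ x % 6 = 4
  · exact activated_of_eq_zero_or_emod_six h0 hx (Or.inr h6)
  · exact activated_of_emod_six_eq_one_or_five hm (by omega) hx (by omega)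

theorem activated_three_mul (hm : 3 ≤ m) (k : ℕ) (hk : 3 * k < 3 * m) : A (3 * (k : ℤ)) := by
  induction k with
  | zero => exact activated_of_eq_zero_or_emod_six (by omega) (by omega) (by omega)
  | succ k ih =>
    refine activated_circulant_of_forall_offset_ne (by omega) _ 3 ?_
    rintro d (rfl | rfl | rfl | rfl) hd
    · exact activated_of_emod_three_ne_zero hm (by omega) (by omega) (by omega)
    · exact activated_of_emod_three_ne_zero hm (by omega) (by omega) (by omega)
    · exact absurd rfl hd
    · have : 3 * ((k + 1 : ℕ) : ℤ) + -3 = 3 * (k : ℤ) := by push_cast; ring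
      rw [this]
      exact ih (by omega)

theorem activated [NeZero m] (hm : 3 ≤ m) (v : ZMod (3 * m)) :
    Activated (circulantGraph ({1, 3} : Set (ZMod (3 * m)))) (fun _ => 3) (circulantSeed m) v := by
  have hv : (v.val : ℤ) < 3 * m := by exact_mod_cast ZMod.val_lt v
  rw [← ZMod.natCast_zmod_val v, ← Int.cast_natCast]
  by_cases h3 : (v.val : ℤ) % 3 = 0
  · have := activated_three_mul hm (v.val / 3) (by omega)
    rwa [show 3 * ((v.val / 3 : ℕ) : ℤ) = v.val by omega] at this
  · exact activated_of_emod_three_ne_zero hm (by omega) hv h3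

end circulantSeed

theorem le_card_of_activated_circulantGraph_one_three {m : ℕ} [NeZero m] (hm : 3 ≤ m)
    (S : Finset (ZMod (3 * m)))
    (h : ∀ v, Activated (circulantGraph ({1, 3} : Set (ZMod (3 * m)))) (fun _ => 3) S v) :
    m + 1 ≤ S.card := by
  have key := Activated.threshold_mul_card_compl_le (d := 4)
    (fun v => (degree_circulantGraph_one_three (by omega) v).le) h
  have hS := S.card_le_univ
  rw [Finset.card_compl, ZMod.card] at key
  rw [ZMod.card] at hS
  omega

theorem minSeed_circulantGraph_one_three (m : ℕ) [NeZero m] (hm : 3 ≤ m) :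
    minSeed (circulantGraph ({1, 3} : Set (ZMod (3 * m)))) (fun _ => 3) = m + 1 := by
  rw [← card_circulantSeed m]
  exact minSeed_eq_card_of_forall_le _ (circulantSeed.activated hm) fun S hS =>
    (card_circulantSeed m).trans_le (le_card_of_activated_circulantGraph_one_three hm S hS)

end Percolation

/-- For every `m ≥ 3`, `min-seed(C_m ⊘ C_3, 3) = m + 1`. -/
theorem minSeed_torusCordalis_three (m : ℕ) [NeZero m] (hm : 3 ≤ m) :
    minSeed (torusCordalis m 3) (fun _ => 3) = m + 1 := by
  have e := torusCordalisIsoCirculant m 3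
  rw [Nat.cast_ofNat] at e
  rw [minSeed_congr e, minSeed_circulantGraph_one_three m hm]
end
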